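/- arXiv:1701.02204 — 2 statements merged into one kernel-verified Lean document; each statement's English description precedes it below -/
import Mathlib

section
/- Let G be a finite simple graph and v a vertex of G. For n ≥ 1 let G^2_n be the graph obtained from G by adding a new vertex w adjacent only to v, and then attaching n-1 pendant edges at w (i.e., adding n-1 further new vertices each adjacent only to w). Then there exists N (depending on G) such that for all n ≥ N, the independent set sequence of G^2_n is unimodal. -/
open Finset Polynomial
open scoped Classical

/-- A finset of vertices is an independent set: pairwise non-adjacent. -/
def IsIndepFinset {V : Type*} (G : SimpleGraph V) (s : Finset V) : Prop :=
  ∀ a ∈ s, ∀ b ∈ s, ¬ G.Adj a b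

/-- `indepCount G t` is the number of independent sets of size `t` in `G`. -/
noncomputable def indepCount {V : Type*} [Fintype V] (G : SimpleGraph V) (t : ℕ) : ℕ :=
  ((Finset.univ : Finset (Finset V)).filter (fun s => IsIndepFinset G s ∧ s.card = t)).card

/-- The independence polynomial of `G`, as a real polynomial:
`p(G,x) = ∑_t i_G(t) x^t`, i.e. the sum of `x^|s|` over all independent sets `s` of `G`. -/
noncomputable def indepPoly {V : Type*} [Fintype V] (G : SimpleGraph V) : Polynomial ℝ :=
  ∑ s ∈ (Finset.univ : Finset (Finset V)).filter (fun s => IsIndepFinset G s),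
    (X : Polynomial ℝ) ^ s.card

/-- A real polynomial is LC⁺ if its coefficients up to its degree are positive and form a
log-concave sequence. -/
def LCPlus (p : Polynomial ℝ) : Prop :=
  (∀ i ≤ p.natDegree, 0 < p.coeff i) ∧
  ∀ k : ℕ, p.coeff k * p.coeff (k + 2) ≤ p.coeff (k + 1) ^ 2

/-- A sequence of naturals is unimodal: it rises to some mode `m` and falls thereafter. -/
def UnimodalNat (a : ℕ → ℕ) : Prop :=
  ∃ m : ℕ, (∀ i j : ℕ, i ≤ j → j ≤ m → a i ≤ a j) ∧ (∀ i j : ℕ, m ≤ i → i ≤ j → a j ≤ a i)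

/-- The `n`-concatenation `G^n(v,w)`: `n` disjoint copies of `G`, with the vertex `w` of the
`i`th copy joined to the vertex `v` of the `(i+1)`st copy. -/
def concat {V : Type*} (G : SimpleGraph V) (v w : V) (n : ℕ) :
    SimpleGraph (V × Fin n) :=
  SimpleGraph.fromRel (fun p q =>
    (p.2 = q.2 ∧ G.Adj p.1 q.1) ∨ (p.1 = w ∧ q.1 = v ∧ (p.2 : ℕ) + 1 = (q.2 : ℕ)))

/-- `G - N[u]`: the induced subgraph of `G` on the vertices outside the closed neighborhood
of `u`. -/
def delNbhd {V : Type*} (G : SimpleGraph V) (u : V) :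
    SimpleGraph {x : V // ¬ (x = u ∨ G.Adj u x)} :=
  G.comap Subtype.val

/-- `attachStar2 G v n` (the graph `G²ₙ`) is obtained from `G` by adding a new vertex
`w = Sum.inr (Sum.inl ())` adjacent only to `v`, and attaching `n - 1` further pendant edges
at `w`. -/
def attachStar2 {V : Type*} (G : SimpleGraph V) (v : V) (n : ℕ) :
    SimpleGraph (V ⊕ (Unit ⊕ Fin (n - 1))) :=
  SimpleGraph.fromRel (fun p q =>
    (∃ a b : V, p = Sum.inl a ∧ q = Sum.inl b ∧ G.Adj a b) ∨
    (p = Sum.inl v ∧ q = Sum.inr (Sum.inl ())) ∨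
    (∃ i : Fin (n - 1), p = Sum.inr (Sum.inl ()) ∧ q = Sum.inr (Sum.inr i)))

/-! Splitting the independent sets of `G²ₙ` according to whether they contain `w` gives
`I(G²ₙ; x) = I(G; x) (1 + x)^N + x I(G - v; x)` with `N = n - 1`. Let `d = deg I(G; x)`.
For `t > d` the coefficient of `x^t` in `I(G; x) (1 + x)^N` is a nonnegative combination of
`C(N, t - d), …, C(N, t)`. Once the sequence stops increasing we have `2t + 1 ≥ N`, and then
these binomials are either all on the decreasing side of `N / 2` or all within `d` of
`N / 2 - 1`, where `k ↦ C(N, k)` is concave as soon as `4d² ≤ N`; in both cases the sequence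
does not increase at the next step either. For `t ≤ d` the increments of `I(G; x) (1 + x)^N`
grow without bound in `N` (its constant coefficient is `1`), which swamps the fixed perturbation
`x I(G - v; x)`. -/

open Filter

namespace Nat

theorem cast_choose_succ_mul (N k : ℕ) :
    (N.choose (k + 1) : ℝ) * (k + 1) = N.choose k * (N - k) := by
  rcases le_or_gt k N with hk | hk
  · have := congrArg (Nat.cast : ℕ → ℝ) (N.choose_succ_right_eq k)
    push_cast [Nat.cast_sub hk] at this
    exact this
  · simp [choose_eq_zero_of_lt hk, choose_eq_zero_of_lt (hk.trans (lt_add_one k))]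

theorem cast_choose_succ_sub_choose_mul (N k : ℕ) :
    ((N.choose (k + 1) : ℝ) - N.choose k) * (k + 1) = N.choose k * (N - 2 * k - 1) := by
  linear_combination cast_choose_succ_mul N k

theorem cast_choose_le_choose_succ {N k : ℕ} (h : 2 * k + 1 ≤ N) :
    (N.choose k : ℝ) ≤ N.choose (k + 1) := by
  have := cast_choose_succ_sub_choose_mul N k
  have : (0 : ℝ) ≤ N - 2 * k - 1 := by
    rw [sub_sub, sub_nonneg]; exact_mod_cast h
  nlinarith [(N.choose k).cast_nonneg (α := ℝ)]

theorem cast_choose_succ_le_choose {N k : ℕ} (h : N ≤ 2 * k + 1) :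
    (N.choose (k + 1) : ℝ) ≤ N.choose k := by
  have := cast_choose_succ_sub_choose_mul N k
  have : (N : ℝ) - 2 * k - 1 ≤ 0 := by
    rw [sub_sub, sub_nonpos]; exact_mod_cast h
  nlinarith [(N.choose k).cast_nonneg (α := ℝ)]

theorem sub_le_cast_choose_succ_sub_choose_mul {N k : ℕ} (h : 2 * k + 1 ≤ N) :
    (N : ℝ) - 2 * k - 1 ≤ ((N.choose (k + 1) : ℝ) - N.choose k) * (k + 1) := by
  have hc : (1 : ℝ) ≤ N.choose k := by exact_mod_cast choose_pos (by omega)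
  have : (0 : ℝ) ≤ N - 2 * k - 1 := by
    rw [sub_sub, sub_nonneg]; exact_mod_cast h
  rw [cast_choose_succ_sub_choose_mul]
  nlinarith

theorem cast_choose_add_choose_add_two_le {N k : ℕ} (h : ((N : ℝ) - 2 * k - 2) ^ 2 ≤ N + 2) :
    (N.choose k : ℝ) + N.choose (k + 2) ≤ 2 * N.choose (k + 1) := by
  have hkN : k < N := by
    by_contra! hNk
    have : (N : ℝ) ≤ k := by exact_mod_cast hNk
    nlinarith
  have hpos : (0 : ℝ) < (N - k) * (k + 2) := by
    have : (k : ℝ) < N := by exact_mod_cast hkN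
    nlinarith
  have key : ((N.choose k : ℝ) + N.choose (k + 2) - 2 * N.choose (k + 1)) * ((N - k) * (k + 2))
      = N.choose (k + 1) * ((N - 2 * k - 2) ^ 2 - (N + 2)) := by
    have h2 := cast_choose_succ_mul N (k + 1)
    push_cast at h2
    linear_combination (-(k + 2 : ℝ)) * cast_choose_succ_mul N k + (N - k : ℝ) * h2
  have hprod : ((N.choose k : ℝ) + N.choose (k + 2) - 2 * N.choose (k + 1))
      * ((N - k) * (k + 2)) ≤ 0 := by
    rw [key]
    exact mul_nonpos_of_nonneg_of_nonpos (by positivity) (by linarith)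
  linarith [nonpos_of_mul_nonpos_left hprod hpos]

theorem tendsto_cast_choose_succ_sub_choose (k : ℕ) :
    Tendsto (fun N : ℕ => (N.choose (k + 1) : ℝ) - N.choose k) atTop atTop := by
  have hlin : Tendsto (fun N : ℕ => ((N : ℝ) - 2 * k - 1) / (k + 1)) atTop atTop := by
    refine Tendsto.atTop_div_const (by positivity) ?_
    simp only [sub_sub]
    exact tendsto_atTop_add_const_right _ _ tendsto_natCast_atTop_atTop
  refine tendsto_atTop_mono' atTop ?_ hlin
  filter_upwards [eventually_ge_atTop (2 * k + 1)] with N hN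
  rw [div_le_iff₀ (by positivity)]
  exact Nat.sub_le_cast_choose_succ_sub_choose_mul hN

end Nat

def NoValley {α : Type*} [Preorder α] (a : ℕ → α) : Prop :=
  ∀ t, a (t + 1) ≤ a t → a (t + 2) ≤ a (t + 1)

theorem unimodalNat_of_noValley {a : ℕ → ℕ} (h : NoValley a)
    (hex : ∃ t, a (t + 1) ≤ a t) : UnimodalNat a := by
  set m := Nat.find hex
  have hinc : ∀ t < m, a t ≤ a (t + 1) := fun t ht => (not_le.1 (Nat.find_min hex ht)).le
  have hdec : ∀ t ≥ m, a (t + 1) ≤ a t := fun t ht => by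
    induction t, ht using Nat.le_induction with
    | base => exact Nat.find_spec hex
    | succ t _ ih => exact h t ih
  have hmono : Monotone fun t => a (min t m) := monotone_nat_of_le_succ fun t => by
    rcases lt_or_ge t m with ht | ht
    · rw [min_eq_left ht.le, min_eq_left ht]; exact hinc t ht
    · rw [min_eq_right ht, min_eq_right (by omega)]
  refine ⟨m, fun i j hij hj => ?_, fun i j hi hij =>
    antitoneOn_nat_Ici_of_succ_le hdec hi (hi.trans hij) hij⟩
  simpa [min_eq_left hj, min_eq_left (hij.trans hj)] using hmono hij

namespace Polynomial

section

variable (P : ℝ[X]) (N : ℕ)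

theorem coeff_mul_one_add_X_pow (t : ℕ) :
    (P * (1 + X) ^ N).coeff t = ∑ x ∈ antidiagonal t, P.coeff x.1 * N.choose x.2 := by
  simp only [coeff_mul, coeff_one_add_X_pow]

theorem coeff_mul_one_add_X_pow_succ (t : ℕ) :
    (P * (1 + X) ^ N).coeff (t + 1)
      = P.coeff (t + 1) + ∑ x ∈ antidiagonal t, P.coeff x.1 * N.choose (x.2 + 1) := by
  rw [coeff_mul_one_add_X_pow, Nat.sum_antidiagonal_succ', Nat.choose_zero_right,
    Nat.cast_one, mul_one]

variable {P}

theorem sum_antidiagonal_add_of_natDegree_le {t : ℕ} (hd : P.natDegree ≤ t) (b : ℕ → ℝ)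
    (j : ℕ) :
    ∑ x ∈ antidiagonal (t + j), P.coeff x.1 * b x.2
      = ∑ x ∈ antidiagonal t, P.coeff x.1 * b (x.2 + j) := by
  induction j generalizing b with
  | zero => rfl
  | succ j ih =>
    rw [← add_assoc, Nat.sum_antidiagonal_succ', coeff_eq_zero_of_natDegree_lt (by omega),
      zero_mul, zero_add]
    exact (ih fun k => b (k + 1)).trans (by simp only [add_assoc])

theorem coeff_mul_one_add_X_pow_add_of_natDegree_le {t : ℕ} (hd : P.natDegree ≤ t) (j : ℕ) :
    (P * (1 + X) ^ N).coeff (t + j)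
      = ∑ x ∈ antidiagonal t, P.coeff x.1 * N.choose (x.2 + j) := by
  rw [coeff_mul_one_add_X_pow]
  exact sum_antidiagonal_add_of_natDegree_le hd (fun k => (N.choose k : ℝ)) j

theorem sum_antidiagonal_coeff_mul_nonneg (hP : ∀ i, 0 ≤ P.coeff i) {t : ℕ} {g : ℕ → ℝ}
    (hg : ∀ k ≤ t, t ≤ k + P.natDegree → 0 ≤ g k) :
    0 ≤ ∑ x ∈ antidiagonal t, P.coeff x.1 * g x.2 := by
  refine sum_nonneg fun x hx => ?_
  rw [HasAntidiagonal.mem_antidiagonal] at hx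
  rcases le_or_gt x.1 P.natDegree with hi | hi
  · exact mul_nonneg (hP _) (hg _ (by omega) (by omega))
  · rw [coeff_eq_zero_of_natDegree_lt hi, zero_mul]

theorem le_coeff_mul_one_add_X_pow_succ_sub (hP : ∀ i, 0 ≤ P.coeff i) {t : ℕ}
    (h : 2 * t + 1 ≤ N) :
    P.coeff 0 * (N.choose (t + 1) - N.choose t)
      ≤ (P * (1 + X) ^ N).coeff (t + 1) - (P * (1 + X) ^ N).coeff t := by
  have hsum : (P * (1 + X) ^ N).coeff (t + 1) - (P * (1 + X) ^ N).coeff t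
      = P.coeff (t + 1)
        + ∑ x ∈ antidiagonal t, P.coeff x.1 * (N.choose (x.2 + 1) - N.choose x.2) := by
    simp only [coeff_mul_one_add_X_pow_succ, coeff_mul_one_add_X_pow, mul_sub, sum_sub_distrib]
    ring
  have hterm : ∀ x ∈ antidiagonal t,
      0 ≤ P.coeff x.1 * ((N.choose (x.2 + 1) : ℝ) - N.choose x.2) := fun x hx =>
    mul_nonneg (hP _) (sub_nonneg.2 (Nat.cast_choose_le_choose_succ
      (by rw [HasAntidiagonal.mem_antidiagonal] at hx; omega)))
  rw [hsum]
  exact (single_le_sum hterm (by simp : ((0 : ℕ), t) ∈ antidiagonal t)).trans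
    (le_add_of_nonneg_left (hP _))

theorem coeff_mul_one_add_X_pow_add_two_le (hP : ∀ i, 0 ≤ P.coeff i) {t : ℕ}
    (hd : P.natDegree ≤ t)
    (hdec : ∀ k ≤ t, t ≤ k + P.natDegree → (N.choose (k + 2) : ℝ) ≤ N.choose (k + 1)) :
    (P * (1 + X) ^ N).coeff (t + 2) ≤ (P * (1 + X) ^ N).coeff (t + 1) := by
  rw [← sub_nonneg, coeff_mul_one_add_X_pow_add_of_natDegree_le N hd,
    coeff_mul_one_add_X_pow_add_of_natDegree_le N hd, ← sum_sub_distrib]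
  simp only [← mul_sub]
  exact sum_antidiagonal_coeff_mul_nonneg hP fun k hk hkt => sub_nonneg.2 (hdec k hk hkt)

theorem coeff_mul_one_add_X_pow_add_coeff_add_two_le (hP : ∀ i, 0 ≤ P.coeff i) {t : ℕ}
    (hd : P.natDegree ≤ t)
    (hconc : ∀ k ≤ t, t ≤ k + P.natDegree →
      (N.choose k : ℝ) + N.choose (k + 2) ≤ 2 * N.choose (k + 1)) :
    (P * (1 + X) ^ N).coeff t + (P * (1 + X) ^ N).coeff (t + 2)
      ≤ 2 * (P * (1 + X) ^ N).coeff (t + 1) := by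
  have hsum : 2 * (P * (1 + X) ^ N).coeff (t + 1)
      - ((P * (1 + X) ^ N).coeff t + (P * (1 + X) ^ N).coeff (t + 2))
      = ∑ x ∈ antidiagonal t, P.coeff x.1 *
          (2 * N.choose (x.2 + 1) - (N.choose x.2 + N.choose (x.2 + 2))) := by
    rw [coeff_mul_one_add_X_pow_add_of_natDegree_le N hd 1,
      coeff_mul_one_add_X_pow_add_of_natDegree_le N hd 2, coeff_mul_one_add_X_pow, mul_sum,
      ← sum_add_distrib, ← sum_sub_distrib]
    exact sum_congr rfl fun x _ => by ring
  rw [← sub_nonneg, hsum]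
  exact sum_antidiagonal_coeff_mul_nonneg hP fun k hk hkt => sub_nonneg.2 (hconc k hk hkt)

theorem coeff_mul_one_add_X_pow_add_two_le_of_succ_le (hP : ∀ i, 0 ≤ P.coeff i)
    (hP0 : 0 < P.coeff 0) {t : ℕ} (hd : P.natDegree ≤ t) (hN : 4 * P.natDegree ^ 2 ≤ N)
    (hle : (P * (1 + X) ^ N).coeff (t + 1) ≤ (P * (1 + X) ^ N).coeff t) :
    (P * (1 + X) ^ N).coeff (t + 2) ≤ (P * (1 + X) ^ N).coeff (t + 1) := by
  have hNt : N ≤ 2 * t + 1 := by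
    by_contra! hlt
    have hrise := le_coeff_mul_one_add_X_pow_succ_sub N hP (t := t) (by omega)
    have hgap := Nat.sub_le_cast_choose_succ_sub_choose_mul (N := N) (k := t) (by omega)
    have : (0 : ℝ) < N - 2 * t - 1 := by
      rw [sub_sub, sub_pos]; exact_mod_cast hlt
    nlinarith
  by_cases hfar : N ≤ 2 * (t - P.natDegree) + 3
  · exact coeff_mul_one_add_X_pow_add_two_le N hP hd fun k _ hkt =>
      Nat.cast_choose_succ_le_choose (by omega)
  -- Otherwise all shifts `k` lie within `deg P` of `N / 2 - 1`, where binomials are concave.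
  have hconc := coeff_mul_one_add_X_pow_add_coeff_add_two_le N hP hd fun k hk hkt => by
    apply Nat.cast_choose_add_choose_add_two_le
    have hlo : -(2 * P.natDegree : ℤ) ≤ N - 2 * k - 2 := by omega
    have hhi : (N : ℤ) - 2 * k - 2 ≤ 2 * P.natDegree := by omega
    have : ((N : ℤ) - 2 * k - 2) ^ 2 ≤ N + 2 := by nlinarith
    exact_mod_cast this
  linarith

end

theorem eventually_noValley_coeff_mul_one_add_X_pow_add {P : ℝ[X]} (Q : ℝ[X])
    (hP : ∀ i, 0 ≤ P.coeff i) (hP0 : 0 < P.coeff 0) :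
    ∀ᶠ N in atTop, NoValley (P * (1 + X) ^ N + Q).coeff := by
  set d := max P.natDegree Q.natDegree
  have hgap : ∀ᶠ N : ℕ in atTop, ∀ t ∈ range (d + 1),
      Q.coeff t - Q.coeff (t + 1) < P.coeff 0 * (N.choose (t + 1) - N.choose t) :=
    (eventually_all_finset _).2 fun t _ =>
      ((Nat.tendsto_cast_choose_succ_sub_choose t).const_mul_atTop hP0).eventually_gt_atTop _
  filter_upwards [hgap, eventually_ge_atTop (2 * d + 1), eventually_ge_atTop (4 * d ^ 2)]
    with N hgapN hNd hNsq t hle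
  simp only [coeff_add] at hle ⊢
  rcases le_or_gt t d with htd | hdt
  · have hrise := le_coeff_mul_one_add_X_pow_succ_sub N hP (t := t) (by omega)
    have := hgapN t (mem_range.2 (by omega))
    linarith
  have hQ : ∀ j, t ≤ j → Q.coeff j = 0 := fun j hj =>
    coeff_eq_zero_of_natDegree_lt ((le_max_right _ _).trans_lt (by omega : d < j))
  simp only [hQ t le_rfl, hQ (t + 1) (by omega), hQ (t + 2) (by omega), add_zero] at hle ⊢
  exact coeff_mul_one_add_X_pow_add_two_le_of_succ_le N hP hP0
    ((le_max_left _ _).trans hdt.le)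
    ((Nat.mul_le_mul_left 4 (Nat.pow_le_pow_left (le_max_left _ _) 2)).trans hNsq) hle

end Polynomial

section

variable {W : Type*} [Fintype W] (H : SimpleGraph W)

theorem coeff_indepPoly (t : ℕ) : (indepPoly H).coeff t = indepCount H t := by
  simp only [indepPoly, indepCount, finsetSum_coeff, coeff_X_pow, sum_boole, filter_filter,
    eq_comm (a := t)]

theorem indepCount_zero : indepCount H 0 = 1 := by
  rw [indepCount, card_eq_one]
  exact ⟨∅, by ext s; simp +contextual [IsIndepFinset]⟩

theorem indepCount_eq_zero_of_card_lt {t : ℕ} (h : Fintype.card W < t) : indepCount H t = 0 := by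
  rw [indepCount, card_eq_zero, filter_eq_empty_iff]
  exact fun s _ hs => (s.card_le_univ.trans_lt h).ne hs.2

end

section

variable {V : Type*} (G : SimpleGraph V) (v : V) (n : ℕ)

theorem isIndepFinset_attachStar2_disjSum_iff {A : Finset V} {U : Finset Unit}
    {L : Finset (Fin (n - 1))} :
    IsIndepFinset (attachStar2 G v n) (A.disjSum (U.disjSum L))
      ↔ IsIndepFinset G A ∧ (() ∈ U → v ∉ A ∧ L = ∅) := by
  constructor
  · intro h
    refine ⟨fun a ha b hb hab => h (.inl a) (by simpa) (.inl b) (by simpa)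
      (by simp [attachStar2, hab, hab.ne]), fun hu => ⟨fun hv => ?_, ?_⟩⟩
    · exact h (.inl v) (by simpa) (.inr (.inl ())) (by simpa) (by simp [attachStar2])
    · refine eq_empty_of_forall_notMem fun i hi => ?_
      exact h (.inr (.inl ())) (by simpa) (.inr (.inr i)) (by simpa) (by simp [attachStar2])
  · rintro ⟨hA, hw⟩
    have key : ∀ x ∈ A.disjSum (U.disjSum L), ∀ y ∈ A.disjSum (U.disjSum L),
        ¬ ((∃ a b : V, x = .inl a ∧ y = .inl b ∧ G.Adj a b) ∨
          (x = .inl v ∧ y = .inr (.inl ())) ∨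
          (∃ i : Fin (n - 1), x = .inr (.inl ()) ∧ y = .inr (.inr i))) := by
      rintro x hx y hy (⟨a, b, rfl, rfl, hab⟩ | ⟨rfl, rfl⟩ | ⟨i, rfl, rfl⟩)
      · exact hA a (by simpa using hx) b (by simpa using hy) hab
      · exact (hw (by simpa using hy)).1 (by simpa using hx)
      · simp [(hw (by simpa using hx)).2] at hy
    intro x hx y hy hxy
    rw [attachStar2, SimpleGraph.fromRel_adj] at hxy
    exact hxy.2.elim (key x hx y hy) (key y hy x hx)

theorem indepPoly_attachStar2 [Fintype V] :
    indepPoly (attachStar2 G v n) = indepPoly G * (1 + X) ^ (n - 1)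
      + X * ∑ s ∈ univ.filter (fun s => IsIndepFinset G s ∧ v ∉ s), X ^ s.card := by
  let e : Finset Unit × Finset V × Finset (Fin (n - 1))
      ≃ Finset (V ⊕ (Unit ⊕ Fin (n - 1))) :=
    { toFun := fun p => p.2.1.disjSum (p.1.disjSum p.2.2)
      invFun := fun s => (s.toRight.toLeft, s.toLeft, s.toRight.toRight)
      left_inv := fun p => by simp
      right_inv := fun s => by simp [toLeft_disjSum_toRight] }
  rw [indepPoly, sum_filter, ← e.sum_comp, Fintype.sum_prod_type,
    Fintype.sum_eq_add ∅ {()} (by simp) fun U hU =>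
      (hU.2 ((nonempty_iff_ne_empty.2 hU.1).eq_univ.trans univ_unique)).elim]
  simp only [e, Equiv.coe_fn_mk, isIndepFinset_attachStar2_disjSum_iff, card_disjSum]
  congr 1
  · simp only [notMem_empty, false_imp_iff, and_true, card_empty, zero_add]
    rw [Fintype.sum_prod_type, indepPoly, sum_filter, sum_mul]
    refine Fintype.sum_congr _ _ fun A => ?_
    split_ifs
    · rw [add_comm 1 X, ← Fin.sum_pow_mul_eq_add_pow, mul_sum]
      simp [pow_add]
    · simp
  · simp only [mem_singleton, true_imp_iff, card_singleton]
    rw [Fintype.sum_prod_type, sum_filter, mul_sum]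
    refine Fintype.sum_congr _ _ fun A => ?_
    by_cases hA : IsIndepFinset G A ∧ v ∉ A
    · simp [hA, pow_succ']
    · simp [hA, ← and_assoc]

end

/-- For any finite graph `G`, any vertex `v`, and all sufficiently large `n`, the graph `G²ₙ`
obtained from `G` by attaching a star with `n` leaves at `v` via one of its leaves has
unimodal independent set sequence. -/
theorem attachStar2_indepSeq_unimodal {V : Type*} [Fintype V] (G : SimpleGraph V) (v : V) :
    ∃ N : ℕ, ∀ n : ℕ, N ≤ n → UnimodalNat (indepCount (attachStar2 G v n)) := by
  have hP : ∀ i, 0 ≤ (indepPoly G).coeff i := fun i => by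
    rw [coeff_indepPoly]; exact Nat.cast_nonneg _
  have hP0 : 0 < (indepPoly G).coeff 0 := by simp [coeff_indepPoly, indepCount_zero]
  obtain ⟨N, hN⟩ := eventually_atTop.1 <| eventually_noValley_coeff_mul_one_add_X_pow_add
    (X * ∑ s ∈ univ.filter (fun s => IsIndepFinset G s ∧ v ∉ s), X ^ s.card) hP hP0
  refine ⟨N + 1, fun n hn => unimodalNat_of_noValley (fun t ht => ?_)
    ⟨_, (indepCount_eq_zero_of_card_lt _ (lt_add_one _)).trans_le (Nat.zero_le _)⟩⟩
  have h := hN (n - 1) (by omega) t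
  simp only [← indepPoly_attachStar2, coeff_indepPoly, Nat.cast_le] at h
  exact h ht
end

section
/- Let g(x) = Σ_{i=0}^ℓ g_i x^i and h(x) = Σ_{j=1}^{ℓ'} h_j x^j be real polynomials all of whose listed coefficients g_0,...,g_ℓ and h_1,...,h_{ℓ'} are positive. Then there exists N (depending on g and h) such that for all n ≥ N, the coefficient sequence of the polynomial g(x)(1+x)^n + h(x) is unimodal. -/
open Polynomial Finset

noncomputable def Cn (n : ℕ) (j : ℤ) : ℝ := if 0 ≤ j then (n.choose j.toNat : ℝ) else 0

noncomputable def Dn (n : ℕ) (j : ℤ) : ℝ := Cn n (j+1) - Cn n j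


lemma Cn_nonneg (n : ℕ) (j : ℤ) : 0 ≤ Cn n j := by
  unfold Cn; split <;> positivity

lemma Cn_ofNat (n k : ℕ) : Cn n (k : ℤ) = (n.choose k : ℝ) := by
  simp [Cn]

lemma Dn_nonneg (n : ℕ) (j : ℤ) (h : 2*j + 1 ≤ (n:ℤ)) : 0 ≤ Dn n j := by
  unfold Dn
  rcases lt_trichotomy j 0 with hj | hj | hj
  · rcases lt_or_ge (j+1) 0 with hj1 | hj1
    · rw [Cn, Cn, if_neg (by omega), if_neg (by omega)]; simp
    · rw [Cn, Cn, if_pos hj1, if_neg (by omega)]; simp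
  · subst hj; simp [Cn]; omega
  · obtain ⟨k, rfl⟩ : ∃ k : ℕ, j = (k:ℤ) := ⟨j.toNat, by omega⟩
    have hk : 2*k+1 ≤ n := by exact_mod_cast h
    have : ((k:ℤ)+1) = ((k+1:ℕ):ℤ) := by push_cast; ring
    rw [this, Cn_ofNat, Cn_ofNat, sub_nonneg, Nat.cast_le]
    rcases Nat.lt_or_ge k (n/2) with hlt | hge
    · exact Nat.choose_le_succ_of_lt_half_left hlt
    · have hodd : n = 2*k+1 := by omega
      have : n - k = k + 1 := by omega
      rw [← this, Nat.choose_symm (by omega)]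

lemma Dn_nonpos (n : ℕ) (j : ℤ) (h : (n:ℤ) ≤ 2*j + 1) : Dn n j ≤ 0 := by
  unfold Dn
  have hj : 0 ≤ j := by
    rcases lt_or_ge j 0 with hj | hj
    · exfalso; omega
    · exact hj
  obtain ⟨k, rfl⟩ : ∃ k : ℕ, j = (k:ℤ) := ⟨j.toNat, by omega⟩
  have hk : n ≤ 2*k+1 := by exact_mod_cast h
  have : ((k:ℤ)+1) = ((k+1:ℕ):ℤ) := by push_cast; ring
  rw [this, Cn_ofNat, Cn_ofNat, sub_nonpos, Nat.cast_le]
  rcases Nat.lt_or_ge k n with hkn | hkn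
  · -- use symmetry
    have h1 : n.choose (k+1) = n.choose (n - (k+1)) := (Nat.choose_symm (by omega)).symm
    have h2 : n.choose k = n.choose (n - k) := (Nat.choose_symm (by omega)).symm
    rw [h1, h2]
    rcases Nat.eq_or_lt_of_le hk with heq | hlt
    · have : n - (k+1) = n - k - 1 := by omega
      have e2 : n - k = k + 1 := by omega
      rw [e2]; have : n - (k+1) = k := by omega
      rw [this]
      exact Nat.le_of_eq (by rw [← e2, Nat.choose_symm (by omega)])
    · have hr : n - (k+1) < n / 2 := by omega
      have := Nat.choose_le_succ_of_lt_half_left hr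
      have e : n - (k+1) + 1 = n - k := by omega
      rwa [e] at this
  · rw [Nat.choose_eq_zero_of_lt (by omega)]
    exact Nat.zero_le _


lemma choose_concave (n j : ℕ) (hj : j + 1 ≤ n)
    (harith : ((j:ℤ) + 1 - ((n:ℤ) - j))^2 + (j + 1) ≤ 3*((n:ℤ) - j)) :
    (n.choose j : ℝ) + n.choose (j+2) ≤ 2 * n.choose (j+1) := by
  have e1 : n.choose (j+1) * (j+1) = n.choose j * (n - j) := Nat.choose_succ_right_eq n j
  have e2 : n.choose (j+2) * (j+2) = n.choose (j+1) * (n - (j+1)) := Nat.choose_succ_right_eq n (j+1)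
  set x := (n.choose j : ℝ) with hx
  set y := (n.choose (j+1) : ℝ) with hy
  set z := (n.choose (j+2) : ℝ) with hz
  have r1 : y * (j+1) = x * ((n:ℝ) - j) := by
    have := congrArg (fun t : ℕ => (t:ℝ)) e1
    push_cast [Nat.cast_sub (show j ≤ n by omega)] at this
    linarith [this]
  have r2 : z * (j+2) = y * ((n:ℝ) - j - 1) := by
    have := congrArg (fun t : ℕ => (t:ℝ)) e2
    push_cast [Nat.cast_sub (show j+1 ≤ n by omega)] at this
    linarith [this]
  have hypos : 0 < y := by
    rw [hy]; exact_mod_cast Nat.choose_pos hj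
  have ha : ((j:ℝ) + 1 - ((n:ℝ) - j))^2 + (j + 1) ≤ 3*((n:ℝ) - j) := by exact_mod_cast harith
  have hj1 : (0:ℝ) < (j:ℝ) + 1 := by positivity
  have hj2 : (0:ℝ) < (j:ℝ) + 2 := by positivity
  have hnj : (0:ℝ) < (n:ℝ) - j := by
    have : (j:ℝ) + 1 ≤ n := by exact_mod_cast hj
    linarith
  nlinarith [mul_pos hnj hj2, sq_nonneg ((j:ℝ)+1-((n:ℝ)-j)), mul_pos hypos hnj,
    mul_le_mul_of_nonneg_left ha (le_of_lt hypos)]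

lemma Dn_anti (n : ℕ) (W : ℕ) (j : ℤ) (h1 : -(W:ℤ) ≤ 2*j - n) (h2 : 2*j - n ≤ W)
    (hn : ((W:ℤ)+2)^2 + 2*W + 4 ≤ n) : Dn n (j+1) ≤ Dn n j := by
  have hj0 : 0 < j := by nlinarith
  obtain ⟨k, rfl⟩ : ∃ k : ℕ, j = (k:ℤ) := ⟨j.toNat, by omega⟩
  have hk1 : k + 1 ≤ n := by nlinarith
  have harith : ((k:ℤ) + 1 - ((n:ℤ) - k))^2 + (k + 1) ≤ 3*((n:ℤ) - k) := by nlinarith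
  have key := choose_concave n k hk1 harith
  unfold Dn
  have e1 : (k:ℤ) + 1 = ((k+1:ℕ):ℤ) := by push_cast; ring
  have e2 : ((k+1:ℕ):ℤ) + 1 = ((k+2:ℕ):ℤ) := by push_cast; ring
  rw [e1, e2, Cn_ofNat, Cn_ofNat, Cn_ofNat]
  linarith

lemma Dn_lower (n k : ℕ) (h : 2*k + 1 ≤ n) : ((n:ℝ) - 2*k - 1)/(k+1) ≤ Dn n k := by
  have e1 : n.choose (k+1) * (k+1) = n.choose k * (n - k) := Nat.choose_succ_right_eq n k
  have r1 : (n.choose (k+1) : ℝ) * (k+1) = (n.choose k : ℝ) * ((n:ℝ) - k) := by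
    have := congrArg (fun t : ℕ => (t:ℝ)) e1
    push_cast [Nat.cast_sub (show k ≤ n by omega)] at this
    linarith [this]
  have hc1 : (1:ℝ) ≤ n.choose k := by exact_mod_cast Nat.one_le_iff_ne_zero.mpr (Nat.choose_pos (by omega : k ≤ n)).ne'
  unfold Dn
  have e : (k:ℤ) + 1 = ((k+1:ℕ):ℤ) := by push_cast; ring
  rw [e, Cn_ofNat, Cn_ofNat]
  have hk1 : (0:ℝ) < (k:ℝ)+1 := by positivity
  rw [div_le_iff₀ hk1]
  have hnn : (0:ℝ) ≤ (n:ℝ) - 2*k - 1 := by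
    have : (2*k+1:ℝ) ≤ n := by exact_mod_cast h
    linarith
  nlinarith [r1, hc1, hnn]

lemma coeff_mul_onePlusX_pow (g : Polynomial ℝ) (n k : ℕ) :
    (g * (1 + X) ^ n).coeff k
      = ∑ i ∈ range (g.natDegree + 1), g.coeff i * Cn n ((k:ℤ) - i) := by
  rw [coeff_mul, Finset.Nat.sum_antidiagonal_eq_sum_range_succ_mk]
  have hterm : ∀ i ∈ range (k+1), g.coeff i * ((1+X:Polynomial ℝ)^n).coeff (k - i)
      = g.coeff i * Cn n ((k:ℤ) - i) := by
    intro i hi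
    rw [mem_range] at hi
    rw [coeff_one_add_X_pow, Cn, if_pos (by omega)]
    have e : ((k:ℤ) - i).toNat = k - i := by omega
    rw [e]
  rw [Finset.sum_congr rfl hterm]
  rcases le_or_gt (g.natDegree + 1) (k + 1) with hle | hlt
  · symm
    apply Finset.sum_subset (by simp [range_subset]; omega)
    intro i _ hni
    rw [mem_range, not_lt] at hni
    rw [g.coeff_eq_zero_of_natDegree_lt (by omega), zero_mul]
  · apply Finset.sum_subset (by simp [range_subset]; omega)
    intro i _ hni
    rw [mem_range, not_lt] at hni
    rw [Cn, if_neg (by omega), mul_zero]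

/-- A sequence of reals is unimodal: it rises to some mode `m` and falls thereafter. -/
def UnimodalReal (a : ℕ → ℝ) : Prop :=
  ∃ m : ℕ, (∀ i j : ℕ, i ≤ j → j ≤ m → a i ≤ a j) ∧ (∀ i j : ℕ, m ≤ i → i ≤ j → a j ≤ a i)

lemma unimodal_of_mode (a : ℕ → ℝ) (m : ℕ)
    (h1 : ∀ k < m, a k ≤ a (k+1)) (h2 : ∀ k, m ≤ k → a (k+1) ≤ a k) :
    UnimodalReal a := by
  refine ⟨m, ?_, ?_⟩
  · intro i j hij hjm
    induction j with
    | zero => have : i = 0 := by omega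
              simp [this]
    | succ j ih =>
      rcases Nat.eq_or_lt_of_le hij with rfl | hlt
      · exact le_refl _
      · exact le_trans (ih (by omega) (by omega)) (h1 j (by omega))
  · intro i j him hij
    induction j with
    | zero => have : i = 0 := by omega
              simp [this]
    | succ j ih =>
      rcases Nat.eq_or_lt_of_le hij with rfl | hlt
      · exact le_refl _
      · exact le_trans (h2 j (by omega)) (ih (by omega))

open Classical in
lemma exists_mode (a : ℕ → ℝ) (k0 k1 : ℕ)
    (hA : ∀ k < k0, a k ≤ a (k+1))
    (hB : ∀ k, k0 ≤ k → k < k1 → a (k+2) - a (k+1) ≤ a (k+1) - a k)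
    (hC : ∀ k, k1 ≤ k → a (k+1) ≤ a k) :
    ∃ m, (∀ k < m, a k ≤ a (k+1)) ∧ (∀ k, m ≤ k → a (k+1) ≤ a k) := by
  by_cases hP : ∃ k, (k < k1 ∧ k0 ≤ k) ∧ a (k+1) < a k
  · set m := Nat.find hP with hm
    obtain ⟨⟨hmk1, hmk0⟩, hneg⟩ := Nat.find_spec hP
    refine ⟨m, ?_, ?_⟩
    · intro k hk
      rcases lt_or_ge k k0 with h | h
      · exact hA k h
      · have hmin := Nat.find_min hP (m := k) hk
        push_neg at hmin
        exact hmin ⟨by omega, h⟩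
    · intro k hk
      obtain ⟨t, rfl⟩ : ∃ t, k = m + t := ⟨k - m, by omega⟩
      clear hk
      -- strengthen: a (m+t+1) - a (m+t) ≤ a (m+1) - a m  (while in window), else hC
      have key : ∀ t, (m + t < k1 → a (m + t + 1) - a (m + t) ≤ a (m + 1) - a m) := by
        intro t
        induction t with
        | zero => intro _; exact le_refl _
        | succ t ih =>
          intro hlt
          have h1 : m + t < k1 := by omega
          have step := hB (m + t) (by omega) h1
          have := ih h1
          have e : m + (t+1) + 1 = m + t + 2 := by omega
          have e2 : m + (t+1) = m + t + 1 := by omega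
          rw [e, e2]
          linarith
      have final : ∀ t, a (m + t + 1) ≤ a (m + t) := by
        intro t
        rcases le_or_gt k1 (m + t) with h | h
        · exact hC (m + t) h
        · have := key t h
          linarith
      exact final t
  · push_neg at hP
    refine ⟨k1, ?_, ?_⟩
    · intro k hk
      rcases lt_or_ge k k0 with h | h
      · exact hA k h
      · exact hP k ⟨hk, h⟩
    · exact hC

/-- Proposition (Galvin–Hilyard, "prop-bin"): if `g` has all coefficients (up to its degree)
positive and `h` has zero constant coefficient and all other coefficients (up to its degree)
positive, then for all sufficiently large `n` the coefficient sequence of `g(x)(1+x)ⁿ + h(x)`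
is unimodal. -/
theorem unimodal_g_mul_onePlusX_pow_add_h (g h : Polynomial ℝ)
    (hg : ∀ i ≤ g.natDegree, 0 < g.coeff i)
    (hh0 : h.coeff 0 = 0)
    (hh : ∀ j : ℕ, 1 ≤ j → j ≤ h.natDegree → 0 < h.coeff j) :
    ∃ N : ℕ, ∀ n : ℕ, N ≤ n →
      UnimodalReal (fun k => (g * (1 + X) ^ n + h).coeff k) := by
  set ℓ := g.natDegree with hℓ
  set L := h.natDegree with hL
  have hg0 : 0 < g.coeff 0 := hg 0 (Nat.zero_le _)
  have hhnn : ∀ j, 0 ≤ h.coeff j := by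
    intro j
    rcases Nat.eq_zero_or_pos j with rfl | hj
    · exact le_of_eq hh0.symm
    · rcases le_or_gt j L with hjL | hjL
      · exact le_of_lt (hh j hj hjL)
      · rw [h.coeff_eq_zero_of_natDegree_lt hjL]
  set S : ℝ := ∑ j ∈ range (L+1), h.coeff j with hSdef
  have hS : 0 ≤ S := Finset.sum_nonneg fun j _ => hhnn j
  refine ⟨max (2*L + 2*ℓ + (2*ℓ+4)^2 + 4*ℓ + 40) (2*L + 4 + ⌈((L:ℝ)+1)*S/(g.coeff 0)⌉₊), ?_⟩
  intro n hn
  have hnA : 2*L + 2*ℓ + (2*ℓ+4)^2 + 4*ℓ + 40 ≤ n := le_trans (le_max_left _ _) hn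
  have hnB : 2*L + 4 + ⌈((L:ℝ)+1)*S/(g.coeff 0)⌉₊ ≤ n := le_trans (le_max_right _ _) hn
  set a : ℕ → ℝ := fun k => (g * (1 + X) ^ n + h).coeff k with ha
  show UnimodalReal a
  have delta : ∀ k : ℕ, a (k+1) - a k
      = (∑ i ∈ range (ℓ+1), g.coeff i * Dn n ((k:ℤ) - i)) + (h.coeff (k+1) - h.coeff k) := by
    intro k
    show (g * (1 + X) ^ n + h).coeff (k+1) - (g * (1 + X) ^ n + h).coeff k = _
    rw [coeff_add, coeff_add, coeff_mul_onePlusX_pow, coeff_mul_onePlusX_pow, ← hℓ]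
    have : ∀ i ∈ range (ℓ+1), g.coeff i * Cn n (((k+1:ℕ):ℤ) - i)
        = g.coeff i * Cn n (((k:ℤ) - i) + 1) := by
      intro i _
      congr 2
      push_cast; ring
    rw [Finset.sum_congr rfl this]
    have hs : ∑ i ∈ range (ℓ+1), g.coeff i * (Cn n ((k:ℤ) - i + 1) - Cn n ((k:ℤ) - i))
        = (∑ i ∈ range (ℓ+1), g.coeff i * Cn n ((k:ℤ) - i + 1))
          - ∑ i ∈ range (ℓ+1), g.coeff i * Cn n ((k:ℤ) - i) := by
      rw [← Finset.sum_sub_distrib]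
      apply Finset.sum_congr rfl
      intro i _
      ring
    unfold Dn
    rw [hs]
    ring
  have hgnn : ∀ i ∈ range (ℓ+1), 0 ≤ g.coeff i := by
    intro i hi
    rw [mem_range] at hi
    exact le_of_lt (hg i (by omega))
  set k0 : ℕ := (n+1)/2 with hk0
  set k1 : ℕ := (n + 2*ℓ + 3)/2 with hk1
  -- Region A
  have hA : ∀ k < k0, a k ≤ a (k+1) := by
    intro k hk
    have hkn : 2*k + 1 ≤ n := by omega
    have hsum : ∀ i ∈ range (ℓ+1), 0 ≤ g.coeff i * Dn n ((k:ℤ) - i) := by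
      intro i hi
      exact mul_nonneg (hgnn i hi) (Dn_nonneg n _ (by rw [mem_range] at hi; omega))
    rcases le_or_gt k L with hkL | hkL
    · -- small k: dominate h by the i = 0 term
      have hsplit : ∑ i ∈ range (ℓ+1), g.coeff i * Dn n ((k:ℤ) - i)
          = (∑ i ∈ range ℓ, g.coeff (i+1) * Dn n ((k:ℤ) - (i+1))) + g.coeff 0 * Dn n ((k:ℤ) - 0) :=
        Finset.sum_range_succ' _ ℓ
      have hrest : 0 ≤ ∑ i ∈ range ℓ, g.coeff (i+1) * Dn n ((k:ℤ) - (i+1)) := by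
        apply Finset.sum_nonneg
        intro i hi
        rw [mem_range] at hi
        exact mul_nonneg (le_of_lt (hg (i+1) (by omega))) (Dn_nonneg n _ (by omega))
      have hDk : ((n:ℝ) - 2*k - 1)/(k+1) ≤ Dn n ((k:ℤ) - 0) := by
        rw [show ((k:ℤ) - 0) = (k:ℤ) by ring]
        exact Dn_lower n k hkn
      have hkS : h.coeff k ≤ S := by
        rw [hSdef]
        exact Finset.single_le_sum (fun j _ => hhnn j) (by rw [mem_range]; omega)
      have hk1nn : 0 ≤ h.coeff (k+1) := hhnn (k+1)
      -- S ≤ g0 * ((n-2k-1)/(k+1))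
      have hL1 : (0:ℝ) < (L:ℝ) + 1 := by positivity
      have hk1' : (0:ℝ) < (k:ℝ) + 1 := by positivity
      have hnum : (0:ℝ) ≤ (n:ℝ) - 2*L - 1 := by
        have : (2*L + 1 : ℝ) ≤ n := by exact_mod_cast (by omega : 2*L+1 ≤ n)
        linarith
      have hdiv : ((n:ℝ) - 2*L - 1)/((L:ℝ)+1) ≤ ((n:ℝ) - 2*k - 1)/((k:ℝ)+1) := by
        apply div_le_div₀ (by
            have : (2*k+1:ℝ) ≤ n := by exact_mod_cast hkn
            linarith) (by
            have : (k:ℝ) ≤ L := by exact_mod_cast hkL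
            linarith) hk1' (by
            have : (k:ℝ) ≤ L := by exact_mod_cast hkL
            linarith)
      have hceil : ((L:ℝ)+1)*S/(g.coeff 0) ≤ (n:ℝ) - 2*L - 1 := by
        have h1 := Nat.le_ceil (((L:ℝ)+1)*S/(g.coeff 0))
        have h2 : ((2*L + 4 + ⌈((L:ℝ)+1)*S/(g.coeff 0)⌉₊ : ℕ) : ℝ) ≤ (n:ℝ) := by
          exact_mod_cast hnB
        push_cast at h2
        linarith
      have hkey : S ≤ g.coeff 0 * (((n:ℝ) - 2*k - 1)/((k:ℝ)+1)) := by
        have h3 : S ≤ g.coeff 0 * (((n:ℝ) - 2*L - 1)/((L:ℝ)+1)) := by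
          rw [div_le_iff₀ hg0] at hceil
          rw [← mul_div_assoc, le_div_iff₀ hL1]
          nlinarith
        calc S ≤ g.coeff 0 * (((n:ℝ) - 2*L - 1)/((L:ℝ)+1)) := h3
          _ ≤ _ := by
            apply mul_le_mul_of_nonneg_left hdiv (le_of_lt hg0)
      have : 0 ≤ a (k+1) - a k := by
        rw [delta k, hsplit]
        have := mul_le_mul_of_nonneg_left hDk (le_of_lt hg0)
        linarith
      linarith
    · -- k > L : h terms vanish
      have hz1 : h.coeff (k+1) = 0 := h.coeff_eq_zero_of_natDegree_lt (by omega)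
      have hz0 : h.coeff k = 0 := h.coeff_eq_zero_of_natDegree_lt (by omega)
      have : 0 ≤ a (k+1) - a k := by
        rw [delta k, hz1, hz0]
        have := Finset.sum_nonneg hsum
        linarith
      linarith
  -- Region B
  have hB : ∀ k, k0 ≤ k → k < k1 → a (k+2) - a (k+1) ≤ a (k+1) - a k := by
    intro k hk0' hk1'
    have hL' : L + 1 ≤ k0 := by omega
    have hz : ∀ t, k ≤ t → h.coeff t = 0 := by
      intro t ht
      exact h.coeff_eq_zero_of_natDegree_lt (by omega)
    rw [delta (k+1), delta k, hz (k+2) (by omega), hz (k+1) (by omega), hz k (by omega)]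
    simp only [sub_zero, sub_self, add_zero]
    apply Finset.sum_le_sum
    intro i hi
    rw [mem_range] at hi
    apply mul_le_mul_of_nonneg_left _ (hgnn i (by rw [mem_range]; omega))
    have e : ((k+1:ℕ):ℤ) - i = ((k:ℤ) - i) + 1 := by push_cast; ring
    rw [e]
    apply Dn_anti n (2*ℓ+2) ((k:ℤ) - i) (by push_cast; omega) (by push_cast; omega) (by
      have hnat : (2*ℓ+4)^2 + (2*(2*ℓ+2) + 4) ≤ n := by linarith [hnA]
      zify at hnat
      push_cast
      nlinarith [hnat])
  -- Region C
  have hC : ∀ k, k1 ≤ k → a (k+1) ≤ a k := by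
    intro k hk
    have hz : ∀ t, k ≤ t → h.coeff t = 0 := by
      intro t ht
      exact h.coeff_eq_zero_of_natDegree_lt (by omega)
    have : a (k+1) - a k ≤ 0 := by
      rw [delta k, hz (k+1) (by omega), hz k (by omega)]
      simp only [sub_self, add_zero]
      apply Finset.sum_nonpos
      intro i hi
      rw [mem_range] at hi
      exact mul_nonpos_of_nonneg_of_nonpos (hgnn i (by rw [mem_range]; omega))
        (Dn_nonpos n _ (by omega))
    linarith
  obtain ⟨m, hm1, hm2⟩ := exists_mode a k0 k1 hA hB hC
  exact unimodal_of_mode a m hm1 hm2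
end
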